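/- Let Φ be a smooth conformal Willmore immersion with Gauss map n, mean curvature H, and Willmore quantities S, R⃗ satisfying the system ΔS = −⟨∇n, ∇⊥R⃗⟩ and ΔR⃗ = ∇n × ∇⊥R⃗ + ∇⊥S ∇n. Then S and R⃗ also satisfy ΔS = ⟨H∇Φ, ∇⊥R⃗⟩ and ΔR⃗ = −H∇Φ × ∇⊥R⃗ − ∇⊥S · H∇Φ. -/

import Mathlib

open Real MeasureTheory

noncomputable section

/-- Partial derivative in the first coordinate direction. -/
def pd1 {E : Type*} [NormedAddCommGroup E] [NormedSpace ℝ E]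
    (f : ℝ × ℝ → E) : ℝ × ℝ → E := fun p => fderiv ℝ f p (1, 0)

/-- Partial derivative in the second coordinate direction. -/
def pd2 {E : Type*} [NormedAddCommGroup E] [NormedSpace ℝ E]
    (f : ℝ × ℝ → E) : ℝ × ℝ → E := fun p => fderiv ℝ f p (0, 1)

/-- Euclidean dot product on ℝ³. -/
def dot3 (u v : Fin 3 → ℝ) : ℝ := ∑ i, u i * v i

/-- The unit disk in ℝ². -/
def D2 : Set (ℝ × ℝ) := Metric.ball (0 : ℝ × ℝ) 1
lemma dot3_expand (u v : Fin 3 → ℝ) :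
    dot3 u v = u 0 * v 0 + u 1 * v 1 + u 2 * v 2 := by
  simp [dot3, Fin.sum_univ_three]
lemma cross0 (u v : Fin 3 → ℝ) : crossProduct u v 0 = u 1 * v 2 - u 2 * v 1 := by simp [cross_apply]
lemma cross1 (u v : Fin 3 → ℝ) : crossProduct u v 1 = u 2 * v 0 - u 0 * v 2 := by simp [cross_apply]
lemma cross2 (u v : Fin 3 → ℝ) : crossProduct u v 2 = u 0 * v 1 - u 1 * v 0 := by simp [cross_apply]

lemma dot3_comm (u v : Fin 3 → ℝ) : dot3 u v = dot3 v u := by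
  simp only [dot3_expand]; ring

-- smoothness of pd1 Φ, pd2 Φ
lemma contDiff_pd1 {Φ : ℝ × ℝ → Fin 3 → ℝ} (hΦ : ContDiff ℝ (⊤ : ℕ∞) Φ) :
    ContDiff ℝ 1 (pd1 Φ) :=
  (hΦ.fderiv_right (WithTop.coe_le_coe.mpr le_top)).clm_apply contDiff_const
lemma contDiff_pd2 {Φ : ℝ × ℝ → Fin 3 → ℝ} (hΦ : ContDiff ℝ (⊤ : ℕ∞) Φ) :
    ContDiff ℝ 1 (pd2 Φ) :=
  (hΦ.fderiv_right (WithTop.coe_le_coe.mpr le_top)).clm_apply contDiff_const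

-- Schwarz symmetry
lemma schwarz {Φ : ℝ × ℝ → Fin 3 → ℝ} (hΦ : ContDiff ℝ (⊤ : ℕ∞) Φ) (p : ℝ × ℝ) :
    pd1 (pd2 Φ) p = pd2 (pd1 Φ) p := by
  have h2 : IsSymmSndFDerivAt ℝ Φ p := hΦ.contDiffAt.isSymmSndFDerivAt (by rw [minSmoothness_of_isRCLikeNormedField]; exact (WithTop.coe_le_coe.mpr le_top : ((2:ℕ∞) : WithTop ℕ∞) ≤ ((⊤:ℕ∞) : WithTop ℕ∞)))
  have hdiff : DifferentiableAt ℝ (fderiv ℝ Φ) p :=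
    ((hΦ.fderiv_right (m := 1) (WithTop.coe_le_coe.mpr le_top)).differentiable one_ne_zero) p
  have e1 : fderiv ℝ (fun q => fderiv ℝ Φ q ((0 : ℝ), (1 : ℝ))) p
      = (fderiv ℝ (fderiv ℝ Φ) p).flip (0, 1) := by
    rw [fderiv_clm_apply hdiff (differentiableAt_const _)]
    simp
  have e2 : fderiv ℝ (fun q => fderiv ℝ Φ q ((1 : ℝ), (0 : ℝ))) p
      = (fderiv ℝ (fderiv ℝ Φ) p).flip (1, 0) := by
    rw [fderiv_clm_apply hdiff (differentiableAt_const _)]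
    simp
  show fderiv ℝ (fun q => fderiv ℝ Φ q ((0:ℝ),(1:ℝ))) p (1, 0)
      = fderiv ℝ (fun q => fderiv ℝ Φ q ((1:ℝ),(0:ℝ))) p (0, 1)
  rw [e1, e2]
  exact h2.eq (1, 0) (0, 1)

def mfun (Φ : ℝ × ℝ → Fin 3 → ℝ) : ℝ × ℝ → Fin 3 → ℝ := fun q =>
  (Real.sqrt (dot3 (crossProduct (pd1 Φ q) (pd2 Φ q)) (crossProduct (pd1 Φ q) (pd2 Φ q))))⁻¹ •
    crossProduct (pd1 Φ q) (pd2 Φ q)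

lemma contDiff_cross {Φ : ℝ × ℝ → Fin 3 → ℝ} (hΦ : ContDiff ℝ (⊤ : ℕ∞) Φ) :
    ContDiff ℝ 1 (fun q => (crossProduct (pd1 Φ q) (pd2 Φ q) : Fin 3 → ℝ)) := by
  have h1 : ∀ i : Fin 3, ContDiff ℝ 1 (fun q => pd1 Φ q i) := fun i =>
    (ContinuousLinearMap.proj (R := ℝ) (φ := fun _ : Fin 3 => ℝ) i).contDiff.comp
      (contDiff_pd1 hΦ)
  have h2 : ∀ i : Fin 3, ContDiff ℝ 1 (fun q => pd2 Φ q i) := fun i =>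
    (ContinuousLinearMap.proj (R := ℝ) (φ := fun _ : Fin 3 => ℝ) i).contDiff.comp
      (contDiff_pd2 hΦ)
  apply contDiff_pi.2
  intro i
  fin_cases i
  · simp only [cross0]; exact ((h1 1).mul (h2 2)).sub ((h1 2).mul (h2 1))
  · simp only [cross1]; exact ((h1 2).mul (h2 0)).sub ((h1 0).mul (h2 2))
  · simp only [cross2]; exact ((h1 0).mul (h2 1)).sub ((h1 1).mul (h2 0))

lemma contDiff_Q {Φ : ℝ × ℝ → Fin 3 → ℝ} (hΦ : ContDiff ℝ (⊤ : ℕ∞) Φ) :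
    ContDiff ℝ 1 (fun q =>
      dot3 (crossProduct (pd1 Φ q) (pd2 Φ q)) (crossProduct (pd1 Φ q) (pd2 Φ q))) := by
  have hc := contDiff_cross hΦ
  have h : ∀ i : Fin 3, ContDiff ℝ 1 (fun q => (crossProduct (pd1 Φ q) (pd2 Φ q) : Fin 3 → ℝ) i) :=
    fun i => (ContinuousLinearMap.proj (R := ℝ) (φ := fun _ : Fin 3 => ℝ) i).contDiff.comp hc
  simp only [dot3_expand]
  exact (((h 0).mul (h 0)).add ((h 1).mul (h 1))).add ((h 2).mul (h 2))

lemma lagrange (a b : Fin 3 → ℝ) :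
    dot3 (crossProduct a b) (crossProduct a b)
      = dot3 a a * dot3 b b - dot3 a b * dot3 a b := by
  simp only [dot3_expand, cross0, cross1, cross2]; ring

lemma keyzero (a b w : Fin 3 → ℝ)
    (h1 : dot3 w a = 0) (h2 : dot3 w b = 0) (h3 : dot3 w (crossProduct a b) = 0)
    (hQ : dot3 (crossProduct a b) (crossProduct a b) ≠ 0) : w = 0 := by
  have key : dot3 (crossProduct a b) (crossProduct a b) • w
      = dot3 w (crossProduct a b) • (crossProduct a b)
        - dot3 w a • (crossProduct (crossProduct a b) b)
        + dot3 w b • (crossProduct (crossProduct a b) a) := by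
    funext i
    fin_cases i <;>
      simp only [dot3_expand, cross0, cross1, cross2, Pi.smul_apply, Pi.add_apply,
        Pi.sub_apply, smul_eq_mul, Fin.isValue, Fin.zero_eta, Fin.mk_one, Fin.reduceFinMk] <;>
      ring
  rw [h1, h2, h3] at key
  simp only [zero_smul, sub_zero, add_zero] at key
  exact (smul_eq_zero.mp key).resolve_left hQ

lemma basis_expand (a b w : Fin 3 → ℝ) (E x y : ℝ) (hE : E ≠ 0)
    (hab : dot3 a b = 0) (haa : dot3 a a = E) (hbb : dot3 b b = E)
    (hwa : dot3 w a = x) (hwb : dot3 w b = y)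
    (hwc : dot3 w (crossProduct a b) = 0) :
    w = E⁻¹ • (x • a + y • b) := by
  have hQ : dot3 (crossProduct a b) (crossProduct a b) = E * E := by
    rw [lagrange, hab, haa, hbb]; ring
  have hQ0 : dot3 (crossProduct a b) (crossProduct a b) ≠ 0 := by
    rw [hQ]; exact mul_ne_zero hE hE
  have h0 : w - E⁻¹ • (x • a + y • b) = 0 := by
    apply keyzero a b _ _ _ _ hQ0
    · simp only [dot3_expand, Pi.sub_apply, Pi.smul_apply, Pi.add_apply, smul_eq_mul] at *
      field_simp
      linear_combination E * hwa - x * haa - y * hab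
    · simp only [dot3_expand, Pi.sub_apply, Pi.smul_apply, Pi.add_apply, smul_eq_mul] at *
      field_simp
      linear_combination E * hwb - y * hbb - x * hab
    · have ha : dot3 a (crossProduct a b) = 0 := by
        simp only [dot3_expand, cross0, cross1, cross2]; ring
      have hb : dot3 b (crossProduct a b) = 0 := by
        simp only [dot3_expand, cross0, cross1, cross2]; ring
      simp only [dot3_expand, Pi.sub_apply, Pi.smul_apply, Pi.add_apply, smul_eq_mul] at *
      linear_combination hwc - E⁻¹ * x * ha - E⁻¹ * y * hb
  exact sub_eq_zero.mp h0

lemma fderiv_dot3 {f g : ℝ × ℝ → Fin 3 → ℝ} {p : ℝ × ℝ} (v : ℝ × ℝ)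
    (hf : DifferentiableAt ℝ f p) (hg : DifferentiableAt ℝ g p) :
    fderiv ℝ (fun q => dot3 (f q) (g q)) p v
      = dot3 (fderiv ℝ f p v) (g p) + dot3 (f p) (fderiv ℝ g p v) := by
  have hfi : ∀ i : Fin 3, HasFDerivAt (fun q => f q i)
      ((ContinuousLinearMap.proj i).comp (fderiv ℝ f p)) p :=
    fun i => hasFDerivAt_pi'.1 hf.hasFDerivAt i
  have hgi : ∀ i : Fin 3, HasFDerivAt (fun q => g q i)
      ((ContinuousLinearMap.proj i).comp (fderiv ℝ g p)) p :=
    fun i => hasFDerivAt_pi'.1 hg.hasFDerivAt i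
  have h : HasFDerivAt (fun q => dot3 (f q) (g q))
      (∑ i : Fin 3, (f p i • ((ContinuousLinearMap.proj i).comp (fderiv ℝ g p))
        + g p i • ((ContinuousLinearMap.proj i).comp (fderiv ℝ f p)))) p := by
    have := HasFDerivAt.fun_sum (fun i (_ : i ∈ Finset.univ) => (hfi i).mul (hgi i))
    simpa [dot3] using this
  rw [h.fderiv]
  simp [dot3, Fin.sum_univ_three]
  ring

lemma normal_decomp (Φ nn : ℝ × ℝ → Fin 3 → ℝ) (lam e f g : ℝ × ℝ → ℝ) (p : ℝ × ℝ)
    (hp : p ∈ D2) (hΦ : ContDiff ℝ (⊤ : ℕ∞) Φ)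
    (hab : dot3 (pd1 Φ p) (pd2 Φ p) = 0)
    (haa : dot3 (pd1 Φ p) (pd1 Φ p) = Real.exp (2 * lam p))
    (hbb : dot3 (pd2 Φ p) (pd2 Φ p) = Real.exp (2 * lam p))
    (hn : ∀ q ∈ D2, nn q = mfun Φ q)
    (he : e p = dot3 (pd1 (pd1 Φ) p) (nn p))
    (hf : f p = dot3 (pd2 (pd1 Φ) p) (nn p))
    (hg : g p = dot3 (pd2 (pd2 Φ) p) (nn p)) :
    pd1 nn p = (Real.exp (2 * lam p))⁻¹ • ((-(e p)) • pd1 Φ p + (-(f p)) • pd2 Φ p)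
    ∧ pd2 nn p = (Real.exp (2 * lam p))⁻¹ • ((-(f p)) • pd1 Φ p + (-(g p)) • pd2 Φ p) := by
  have hE0 : (0:ℝ) < Real.exp (2 * lam p) := Real.exp_pos _
  have hE : Real.exp (2 * lam p) ≠ 0 := ne_of_gt hE0
  have hopen : IsOpen D2 := Metric.isOpen_ball
  have hQc := contDiff_Q hΦ
  have hQp : dot3 (crossProduct (pd1 Φ p) (pd2 Φ p)) (crossProduct (pd1 Φ p) (pd2 Φ p))
      = Real.exp (2 * lam p) * Real.exp (2 * lam p) := by
    rw [lagrange, hab, haa, hbb]; ring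
  have hQpos : 0 < dot3 (crossProduct (pd1 Φ p) (pd2 Φ p)) (crossProduct (pd1 Φ p) (pd2 Φ p)) := by
    rw [hQp]; positivity
  have hsq : Real.sqrt (dot3 (crossProduct (pd1 Φ p) (pd2 Φ p))
      (crossProduct (pd1 Φ p) (pd2 Φ p))) = Real.exp (2 * lam p) := by
    rw [hQp, Real.sqrt_mul_self hE0.le]
  have hsq0 : Real.sqrt (dot3 (crossProduct (pd1 Φ p) (pd2 Φ p))
      (crossProduct (pd1 Φ p) (pd2 Φ p))) ≠ 0 := by rw [hsq]; exact hE
  have hcd : DifferentiableAt ℝ (fun q => (crossProduct (pd1 Φ q) (pd2 Φ q) : Fin 3 → ℝ)) p :=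
    (contDiff_cross hΦ).differentiable one_ne_zero p
  have hQd : DifferentiableAt ℝ (fun q =>
      dot3 (crossProduct (pd1 Φ q) (pd2 Φ q)) (crossProduct (pd1 Φ q) (pd2 Φ q))) p :=
    hQc.differentiable one_ne_zero p
  have hsd : DifferentiableAt ℝ (fun q => Real.sqrt
      (dot3 (crossProduct (pd1 Φ q) (pd2 Φ q)) (crossProduct (pd1 Φ q) (pd2 Φ q)))) p :=
    hQd.sqrt (ne_of_gt hQpos)
  have hmdiff : DifferentiableAt ℝ (mfun Φ) p := (hsd.inv hsq0).smul hcd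
  have hd1 : DifferentiableAt ℝ (pd1 Φ) p := (contDiff_pd1 hΦ).differentiable one_ne_zero p
  have hd2 : DifferentiableAt ℝ (pd2 Φ) p := (contDiff_pd2 hΦ).differentiable one_ne_zero p
  have hev : nn =ᶠ[nhds p] mfun Φ := by
    filter_upwards [hopen.mem_nhds hp] with q hq using hn q hq
  have hfd : fderiv ℝ nn p = fderiv ℝ (mfun Φ) p := hev.fderiv_eq
  have hnp : nn p = mfun Φ p := hn p hp
  -- m orthogonal to pd1 Φ, pd2 Φ identically
  have hz1 : (fun q => dot3 (mfun Φ q) (pd1 Φ q)) = fun _ => (0:ℝ) := funext fun q => by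
    simp only [mfun, dot3_expand, cross0, cross1, cross2, Pi.smul_apply, smul_eq_mul]; ring
  have hz2 : (fun q => dot3 (mfun Φ q) (pd2 Φ q)) = fun _ => (0:ℝ) := funext fun q => by
    simp only [mfun, dot3_expand, cross0, cross1, cross2, Pi.smul_apply, smul_eq_mul]; ring
  have hder1 : ∀ v, dot3 (fderiv ℝ (mfun Φ) p v) (pd1 Φ p)
      = - dot3 (mfun Φ p) (fderiv ℝ (pd1 Φ) p v) := by
    intro v
    have h0 : fderiv ℝ (fun q => dot3 (mfun Φ q) (pd1 Φ q)) p v = 0 := by rw [hz1]; simp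
    have hh := fderiv_dot3 v hmdiff hd1
    rw [h0] at hh; linarith
  have hder2 : ∀ v, dot3 (fderiv ℝ (mfun Φ) p v) (pd2 Φ p)
      = - dot3 (mfun Φ p) (fderiv ℝ (pd2 Φ) p v) := by
    intro v
    have h0 : fderiv ℝ (fun q => dot3 (mfun Φ q) (pd2 Φ q)) p v = 0 := by rw [hz2]; simp
    have hh := fderiv_dot3 v hmdiff hd2
    rw [h0] at hh; linarith
  -- unit norm near p
  have hevnorm : (fun q => dot3 (mfun Φ q) (mfun Φ q)) =ᶠ[nhds p] (fun _ => (1:ℝ)) := by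
    have hopen2 : IsOpen {q : ℝ × ℝ | 0 < dot3 (crossProduct (pd1 Φ q) (pd2 Φ q))
        (crossProduct (pd1 Φ q) (pd2 Φ q))} := isOpen_lt continuous_const hQc.continuous
    filter_upwards [hopen2.mem_nhds hQpos] with q hq
    have hmul : Real.sqrt (dot3 (crossProduct (pd1 Φ q) (pd2 Φ q))
          (crossProduct (pd1 Φ q) (pd2 Φ q)))
        * Real.sqrt (dot3 (crossProduct (pd1 Φ q) (pd2 Φ q))
          (crossProduct (pd1 Φ q) (pd2 Φ q)))
        = dot3 (crossProduct (pd1 Φ q) (pd2 Φ q)) (crossProduct (pd1 Φ q) (pd2 Φ q)) :=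
      Real.mul_self_sqrt hq.le
    have hsqq : Real.sqrt (dot3 (crossProduct (pd1 Φ q) (pd2 Φ q))
        (crossProduct (pd1 Φ q) (pd2 Φ q))) ≠ 0 := ne_of_gt (Real.sqrt_pos.2 hq)
    show dot3 (mfun Φ q) (mfun Φ q) = 1
    have expand : dot3 (mfun Φ q) (mfun Φ q)
        = (Real.sqrt (dot3 (crossProduct (pd1 Φ q) (pd2 Φ q)) (crossProduct (pd1 Φ q) (pd2 Φ q))))⁻¹
          * (Real.sqrt (dot3 (crossProduct (pd1 Φ q) (pd2 Φ q)) (crossProduct (pd1 Φ q) (pd2 Φ q))))⁻¹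
          * dot3 (crossProduct (pd1 Φ q) (pd2 Φ q)) (crossProduct (pd1 Φ q) (pd2 Φ q)) := by
      simp only [mfun, dot3_expand, Pi.smul_apply, smul_eq_mul]; ring
    rw [expand, ← hmul]
    field_simp
    rw [Real.sqrt_sq (Real.sqrt_nonneg _)]
  have hderm : ∀ v, dot3 (fderiv ℝ (mfun Φ) p v) (mfun Φ p) = 0 := by
    intro v
    have h0 : fderiv ℝ (fun q => dot3 (mfun Φ q) (mfun Φ q)) p v = 0 := by
      rw [hevnorm.fderiv_eq]; simp
    have hh := fderiv_dot3 v hmdiff hmdiff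
    rw [h0] at hh
    have hc := dot3_comm (mfun Φ p) (fderiv ℝ (mfun Φ) p v)
    linarith
  have hderc : ∀ v, dot3 (fderiv ℝ (mfun Φ) p v) (crossProduct (pd1 Φ p) (pd2 Φ p)) = 0 := by
    intro v
    have hh := hderm v
    have expand : dot3 (fderiv ℝ (mfun Φ) p v) (mfun Φ p)
        = (Real.sqrt (dot3 (crossProduct (pd1 Φ p) (pd2 Φ p)) (crossProduct (pd1 Φ p) (pd2 Φ p))))⁻¹
          * dot3 (fderiv ℝ (mfun Φ) p v) (crossProduct (pd1 Φ p) (pd2 Φ p)) := by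
      simp only [mfun, dot3_expand, Pi.smul_apply, smul_eq_mul]; ring
    rw [expand, hsq] at hh
    rcases mul_eq_zero.mp hh with h | h
    · exact absurd h (inv_ne_zero hE)
    · exact h
  -- the dot products with the basis
  have hx1 : dot3 (pd1 (mfun Φ) p) (pd1 Φ p) = -(e p) := by
    have h := hder1 (1, 0)
    have hval : dot3 (mfun Φ p) (pd1 (pd1 Φ) p) = e p := by
      rw [he, hnp, dot3_comm]
    exact h.trans (by rw [show fderiv ℝ (pd1 Φ) p ((1:ℝ),(0:ℝ)) = pd1 (pd1 Φ) p from rfl, hval])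
  have hy1 : dot3 (pd1 (mfun Φ) p) (pd2 Φ p) = -(f p) := by
    have h := hder2 (1, 0)
    have hval : dot3 (mfun Φ p) (pd1 (pd2 Φ) p) = f p := by
      rw [schwarz hΦ p, hf, hnp, dot3_comm]
    exact h.trans (by rw [show fderiv ℝ (pd2 Φ) p ((1:ℝ),(0:ℝ)) = pd1 (pd2 Φ) p from rfl, hval])
  have hx2 : dot3 (pd2 (mfun Φ) p) (pd1 Φ p) = -(f p) := by
    have h := hder1 (0, 1)
    have hval : dot3 (mfun Φ p) (pd2 (pd1 Φ) p) = f p := by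
      rw [hf, hnp, dot3_comm]
    exact h.trans (by rw [show fderiv ℝ (pd1 Φ) p ((0:ℝ),(1:ℝ)) = pd2 (pd1 Φ) p from rfl, hval])
  have hy2 : dot3 (pd2 (mfun Φ) p) (pd2 Φ p) = -(g p) := by
    have h := hder2 (0, 1)
    have hval : dot3 (mfun Φ p) (pd2 (pd2 Φ) p) = g p := by
      rw [hg, hnp, dot3_comm]
    exact h.trans (by rw [show fderiv ℝ (pd2 Φ) p ((0:ℝ),(1:ℝ)) = pd2 (pd2 Φ) p from rfl, hval])
  have hc1 : dot3 (pd1 (mfun Φ) p) (crossProduct (pd1 Φ p) (pd2 Φ p)) = 0 := hderc (1, 0)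
  have hc2 : dot3 (pd2 (mfun Φ) p) (crossProduct (pd1 Φ p) (pd2 Φ p)) = 0 := hderc (0, 1)
  have hb1 := basis_expand (pd1 Φ p) (pd2 Φ p) (pd1 (mfun Φ) p) (Real.exp (2 * lam p))
    (-(e p)) (-(f p)) hE hab haa hbb hx1 hy1 hc1
  have hb2 := basis_expand (pd1 Φ p) (pd2 Φ p) (pd2 (mfun Φ) p) (Real.exp (2 * lam p))
    (-(f p)) (-(g p)) hE hab haa hbb hx2 hy2 hc2
  constructor
  · show fderiv ℝ nn p ((1:ℝ),(0:ℝ)) = _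
    rw [hfd]; exact hb1
  · show fderiv ℝ nn p ((0:ℝ),(1:ℝ)) = _
    rw [hfd]; exact hb2

lemma alg1 (a b L : Fin 3 → ℝ) (e f g E H : ℝ) (hE : E ≠ 0)
    (hab : dot3 a b = 0) (haa : dot3 a a = E) (hbb : dot3 b b = E)
    (hH : H = (e + g) / (2 * E)) :
    -(dot3 (E⁻¹ • ((-e) • a + (-f) • b)) (crossProduct L (-b) + (2 * H) • (-b))
        + dot3 (E⁻¹ • ((-f) • a + (-g) • b)) (crossProduct L a + (2 * H) • a))
      = dot3 (H • a) (crossProduct L (-b) + (2 * H) • (-b))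
        + dot3 (H • b) (crossProduct L a + (2 * H) • a) := by
  have h2HE : 2 * H * E = e + g := by rw [hH]; field_simp
  have hiE : E * E⁻¹ = 1 := mul_inv_cancel₀ hE
  simp only [dot3_expand] at hab haa hbb
  simp only [dot3_expand, cross0, cross1, cross2, Pi.add_apply, Pi.smul_apply, Pi.neg_apply, Pi.sub_apply,
    smul_eq_mul]
  linear_combination
    (E⁻¹ * (a 0 * (L 1 * b 2 - L 2 * b 1) + a 1 * (L 2 * b 0 - L 0 * b 2)
      + a 2 * (L 0 * b 1 - L 1 * b 0))) * h2HE
    + (E⁻¹ * 2 * H * (g - e)) * hab + (E⁻¹ * 2 * H * f) * haa - (E⁻¹ * 2 * H * f) * hbb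
    - (2 * H * (a 0 * (L 1 * b 2 - L 2 * b 1) + a 1 * (L 2 * b 0 - L 0 * b 2)
      + a 2 * (L 0 * b 1 - L 1 * b 0))) * hiE

lemma alg2 (a b L : Fin 3 → ℝ) (e f g E H : ℝ) (hE : E ≠ 0)
    (hab : dot3 a b = 0) (haa : dot3 a a = E) (hbb : dot3 b b = E)
    (hH : H = (e + g) / (2 * E)) :
    crossProduct (E⁻¹ • ((-e) • a + (-f) • b)) (crossProduct L (-b) + (2 * H) • (-b))
      + crossProduct (E⁻¹ • ((-f) • a + (-g) • b)) (crossProduct L a + (2 * H) • a)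
      + dot3 L (-b) • (E⁻¹ • ((-e) • a + (-f) • b))
      + dot3 L a • (E⁻¹ • ((-f) • a + (-g) • b))
      = -(crossProduct (H • a) (crossProduct L (-b) + (2 * H) • (-b))
          + crossProduct (H • b) (crossProduct L a + (2 * H) • a))
        - (dot3 L (-b) • (H • a) + dot3 L a • (H • b)) := by
  have h2HE : 2 * H * E = e + g := by rw [hH]; field_simp
  have hiE : E * E⁻¹ = 1 := mul_inv_cancel₀ hE
  simp only [dot3_expand] at hab haa hbb
  funext i
  fin_cases i
  · simp only [dot3_expand, cross0, cross1, cross2, Pi.add_apply, Pi.smul_apply, Pi.neg_apply, Pi.sub_apply,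
      smul_eq_mul, Fin.isValue, Fin.zero_eta, Fin.mk_one, Fin.reduceFinMk]
    linear_combination
      (-(E⁻¹ * ((b 0 * L 0 + b 1 * L 1 + b 2 * L 2) * a 0 - (a 0 * L 0 + a 1 * L 1 + a 2 * L 2) * b 0) + 2 * H * E⁻¹ * (a 1 * b 2 - a 2 * b 1))) * h2HE
      + (2 * H * ((b 0 * L 0 + b 1 * L 1 + b 2 * L 2) * a 0 - (a 0 * L 0 + a 1 * L 1 + a 2 * L 2) * b 0) + 4 * H * H * (a 1 * b 2 - a 2 * b 1)) * hiE
      + (E⁻¹ * (e - g) * L 0) * hab - (E⁻¹ * f * L 0) * haa + (E⁻¹ * f * L 0) * hbb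
  · simp only [dot3_expand, cross0, cross1, cross2, Pi.add_apply, Pi.smul_apply, Pi.neg_apply, Pi.sub_apply,
      smul_eq_mul, Fin.isValue, Fin.zero_eta, Fin.mk_one, Fin.reduceFinMk]
    linear_combination
      (-(E⁻¹ * ((b 0 * L 0 + b 1 * L 1 + b 2 * L 2) * a 1 - (a 0 * L 0 + a 1 * L 1 + a 2 * L 2) * b 1) + 2 * H * E⁻¹ * (a 2 * b 0 - a 0 * b 2))) * h2HE
      + (2 * H * ((b 0 * L 0 + b 1 * L 1 + b 2 * L 2) * a 1 - (a 0 * L 0 + a 1 * L 1 + a 2 * L 2) * b 1) + 4 * H * H * (a 2 * b 0 - a 0 * b 2)) * hiE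
      + (E⁻¹ * (e - g) * L 1) * hab - (E⁻¹ * f * L 1) * haa + (E⁻¹ * f * L 1) * hbb
  · simp only [dot3_expand, cross0, cross1, cross2, Pi.add_apply, Pi.smul_apply, Pi.neg_apply, Pi.sub_apply,
      smul_eq_mul, Fin.isValue, Fin.zero_eta, Fin.mk_one, Fin.reduceFinMk]
    linear_combination
      (-(E⁻¹ * ((b 0 * L 0 + b 1 * L 1 + b 2 * L 2) * a 2 - (a 0 * L 0 + a 1 * L 1 + a 2 * L 2) * b 2) + 2 * H * E⁻¹ * (a 0 * b 1 - a 1 * b 0))) * h2HE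
      + (2 * H * ((b 0 * L 0 + b 1 * L 1 + b 2 * L 2) * a 2 - (a 0 * L 0 + a 1 * L 1 + a 2 * L 2) * b 2) + 4 * H * H * (a 0 * b 1 - a 1 * b 0)) * hiE
      + (E⁻¹ * (e - g) * L 2) * hab - (E⁻¹ * f * L 2) * haa + (E⁻¹ * f * L 2) * hbb

theorem stmt12
    (Φ : ℝ × ℝ → Fin 3 → ℝ) (lam : ℝ × ℝ → ℝ) (n : ℝ × ℝ → Fin 3 → ℝ)
    (e f g H S : ℝ × ℝ → ℝ) (L R : ℝ × ℝ → Fin 3 → ℝ)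
    (hΦ : ContDiff ℝ (⊤ : ℕ∞) Φ)
    (hconf : ∀ p ∈ D2,
      dot3 (pd1 Φ p) (pd2 Φ p) = 0 ∧
      dot3 (pd1 Φ p) (pd1 Φ p) = Real.exp (2 * lam p) ∧
      dot3 (pd2 Φ p) (pd2 Φ p) = Real.exp (2 * lam p))
    (hn : ∀ p ∈ D2,
      n p = (Real.sqrt (dot3 (crossProduct (pd1 Φ p) (pd2 Φ p))
          (crossProduct (pd1 Φ p) (pd2 Φ p))))⁻¹ •
        crossProduct (pd1 Φ p) (pd2 Φ p))
    (he : ∀ p ∈ D2, e p = dot3 (pd1 (pd1 Φ) p) (n p))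
    (hf : ∀ p ∈ D2, f p = dot3 (pd2 (pd1 Φ) p) (n p))
    (hg : ∀ p ∈ D2, g p = dot3 (pd2 (pd2 Φ) p) (n p))
    (hH : ∀ p ∈ D2, H p = (e p + g p) / (2 * Real.exp (2 * lam p)))
    -- ∇⊥S = ⟨L, ∇⊥Φ⟩ and ∇⊥R⃗ = L × ∇⊥Φ + 2H ∇⊥Φ
    (hS1 : ∀ p ∈ D2, -(pd2 S p) = dot3 (L p) (-(pd2 Φ p)))
    (hS2 : ∀ p ∈ D2, pd1 S p = dot3 (L p) (pd1 Φ p))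
    (hR1 : ∀ p ∈ D2, -(pd2 R p) =
      crossProduct (L p) (-(pd2 Φ p)) + (2 * H p) • (-(pd2 Φ p)))
    (hR2 : ∀ p ∈ D2, pd1 R p =
      crossProduct (L p) (pd1 Φ p) + (2 * H p) • (pd1 Φ p))
    -- the system ΔS = −⟨∇n, ∇⊥R⃗⟩, ΔR⃗ = ∇n × ∇⊥R⃗ + ∇⊥S ∇n
    (hΔS : ∀ p ∈ D2,
      pd1 (pd1 S) p + pd2 (pd2 S) p
        = -(dot3 (pd1 n p) (-(pd2 R p)) + dot3 (pd2 n p) (pd1 R p)))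
    (hΔR : ∀ p ∈ D2,
      pd1 (pd1 R) p + pd2 (pd2 R) p
        = crossProduct (pd1 n p) (-(pd2 R p)) + crossProduct (pd2 n p) (pd1 R p)
          + (-(pd2 S p)) • pd1 n p + (pd1 S p) • pd2 n p) :
    ∀ p ∈ D2,
      (pd1 (pd1 S) p + pd2 (pd2 S) p
        = dot3 (H p • pd1 Φ p) (-(pd2 R p)) + dot3 (H p • pd2 Φ p) (pd1 R p)) ∧
      (pd1 (pd1 R) p + pd2 (pd2 R) p
        = -(crossProduct (H p • pd1 Φ p) (-(pd2 R p))
            + crossProduct (H p • pd2 Φ p) (pd1 R p))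
          - ((-(pd2 S p)) • (H p • pd1 Φ p) + (pd1 S p) • (H p • pd2 Φ p))) := by
  intro p hp
  obtain ⟨hab, haa, hbb⟩ := hconf p hp
  have hE : Real.exp (2 * lam p) ≠ 0 := ne_of_gt (Real.exp_pos _)
  have hnm : ∀ q ∈ D2, n q = mfun Φ q := fun q hq => hn q hq
  obtain ⟨hd1, hd2⟩ := normal_decomp Φ n lam e f g p hp hΦ hab haa hbb hnm
    (he p hp) (hf p hp) (hg p hp)
  constructor
  · rw [hΔS p hp, hR1 p hp, hR2 p hp, hd1, hd2]
    exact alg1 (pd1 Φ p) (pd2 Φ p) (L p) (e p) (f p) (g p) (Real.exp (2 * lam p)) (H p)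
      hE hab haa hbb (hH p hp)
  · rw [hΔR p hp, hS1 p hp, hS2 p hp, hR1 p hp, hR2 p hp, hd1, hd2]
    exact alg2 (pd1 Φ p) (pd2 Φ p) (L p) (e p) (f p) (g p) (Real.exp (2 * lam p)) (H p)
      hE hab haa hbb (hH p hp)


end
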